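/- Let F be a field and let H1 and H2 be groups. Let τ1 : H1 → Aut_F(W1) be an irreducible finite-dimensional linear representation of H1 over F, and let τ2 : H2 → Aut_F(W2) be an absolutely irreducible finite-dimensional linear representation of H2 over F. Then the linear representation of H1 × H2 on the F-vector space Hom_F(W2, W1), given by (h1, h2) · ψ = τ1(h1) ∘ ψ ∘ τ2(h2)⁻¹, is irreducible. -/

import Mathlib

open Function Module
open scoped TensorProduct

universe u v w x y

/-- A linear representation `τ : H →* Aut_F(W)` is *irreducible* if `W ≠ 0` and the only
`H`-invariant `F`-subspaces of `W` are `0` and `W`. -/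
def RepIsIrreducible {F : Type u} [Field F] {H : Type v} [Group H]
    {W : Type w} [AddCommGroup W] [Module F W] (τ : Representation F H W) : Prop :=
  Nontrivial W ∧
    ∀ p : Submodule F W, (∀ h : H, ∀ w ∈ p, τ h w ∈ p) → p = ⊥ ∨ p = ⊤

/-- A linear representation is *absolutely irreducible* if it remains irreducible after
extension of scalars to every field extension `E` of `F`. -/
def RepIsAbsolutelyIrreducible {F : Type u} [Field F] {H : Type v} [Group H]
    {W : Type w} [AddCommGroup W] [Module F W] (τ : Representation F H W) : Prop :=
  ∀ (E : Type u) [Field E] [Algebra F E],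
    Nontrivial (E ⊗[F] W) ∧
      ∀ p : Submodule E (E ⊗[F] W),
        (∀ h : H, ∀ x ∈ p, LinearMap.baseChange E (τ h) x ∈ p) → p = ⊥ ∨ p = ⊤

/-!
By Burnside's theorem over an algebraic closure `E` of `F`, the operators `τ2 h ⊗ E` span
`End_E (E ⊗ W2)`; counting dimensions, the `τ2 h` already span `End_F W2`. So a nonzero invariant
subspace `p` of `Hom_F(W2, W1)` is stable under right composition with every endomorphism of
`W2`, and the vectors `w` such that `p` contains every map `W2 → F w` form a nonzero
`τ1`-invariant subspace of `W1`, hence all of `W1`. As rank-one maps span `Hom_F(W2, W1)`,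
`p` is everything.
-/

-- Burnside's theorem: by Schur's lemma `End_A V = K`, so by Jacobson density `A = End_K V`.
theorem Subalgebra.eq_top_of_forall_invariant {K V : Type*} [Field K] [IsAlgClosed K]
    [AddCommGroup V] [Module K V] [FiniteDimensional K V] [Nontrivial V]
    (A : Subalgebra K (Module.End K V))
    (hA : ∀ p : Submodule K V, (∀ a ∈ A, ∀ v ∈ p, a v ∈ p) → p = ⊥ ∨ p = ⊤) : A = ⊤ := by
  have : IsSimpleModule A V := (isSimpleModule_iff _ _).mpr
    { eq_bot_or_eq_top := fun q ↦ by
        simpa only [Submodule.restrictScalars_eq_bot_iff, Submodule.restrictScalars_eq_top_iff]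
          using hA (q.restrictScalars K) fun a ha v hv ↦ q.smul_mem (⟨a, ha⟩ : A) hv }
  have hscalar := IsSimpleModule.algebraMap_end_bijective_of_isAlgClosed (A := A) (V := V) K
  have : Module.Finite (Module.End A V) V := .of_restrictScalars_finite K _ _
  refine eq_top_iff.mpr fun g _ ↦ ?_
  let g' : Module.End (Module.End A V) V :=
    { toFun := g
      map_add' := g.map_add
      map_smul' := fun c v ↦ by
        obtain ⟨k, rfl⟩ := hscalar.2 c
        simp }
  obtain ⟨a, ha⟩ := Module.Finite.toModuleEnd_moduleEnd_surjective (R := A) (M := V) g'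
  convert a.2
  ext v
  exact (congr($ha v)).symm

theorem Submodule.span_eq_top_of_span_baseChange_eq_top {F E M N : Type*} [Field F] [Field E]
    [Algebra F E] [AddCommGroup M] [Module F M] [FiniteDimensional F M]
    [AddCommGroup N] [Module F N] [FiniteDimensional F N] (s : Set (M →ₗ[F] N))
    (hs : span E (LinearMap.baseChange E '' s) = ⊤) : span F s = ⊤ := by
  set S := span F s
  let φ := LinearMap.tensorProduct F E M N ∘ₗ S.subtype.baseChange E
  have hφ : LinearMap.range φ = ⊤ := by
    rw [← top_le_iff, ← hs, span_le]
    rintro _ ⟨f, hf, rfl⟩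
    exact ⟨1 ⊗ₜ ⟨f, subset_span hf⟩, by simp [φ, TensorProduct.liftAux_tmul]⟩
  have := LinearMap.finrank_range_le φ
  rw [hφ, finrank_top, Module.finrank_linearMap, Module.finrank_baseChange,
    Module.finrank_baseChange, Module.finrank_baseChange, ← Module.finrank_linearMap] at this
  exact eq_top_of_finrank_eq (le_antisymm (finrank_le S) this)

theorem RepIsAbsolutelyIrreducible.span_range_eq_top {F : Type u} [Field F] {H : Type v}
    [Group H] {W : Type w} [AddCommGroup W] [Module F W] [FiniteDimensional F W]
    {τ : Representation F H W} (hτ : RepIsAbsolutelyIrreducible τ) :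
    Submodule.span F (Set.range τ) = ⊤ := by
  have : Nontrivial (AlgebraicClosure F ⊗[F] W) := (hτ _).1
  let ρ : H →* Module.End (AlgebraicClosure F) (AlgebraicClosure F ⊗[F] W) :=
    (Module.End.baseChangeHom F _ W).toMonoidHom.comp τ
  have hA : Algebra.adjoin (AlgebraicClosure F) (Set.range ρ) = ⊤ :=
    Subalgebra.eq_top_of_forall_invariant _ fun p hp ↦
      (hτ _).2 p fun h ↦ hp _ (Algebra.subset_adjoin ⟨h, rfl⟩)
  have hρ : Submodule.span (AlgebraicClosure F) (Set.range ρ) = ⊤ := by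
    rw [← MonoidHom.coe_mrange, ← MonoidHom.mclosure_range, ← Algebra.adjoin_eq_span,
      hA, Algebra.top_toSubmodule]
  apply Submodule.span_eq_top_of_span_baseChange_eq_top (E := AlgebraicClosure F)
  rwa [← Set.range_comp]

theorem LinearMap.comp_smulRight {R M N P : Type*} [CommSemiring R] [AddCommMonoid M]
    [Module R M] [AddCommMonoid N] [Module R N] [AddCommMonoid P] [Module R P]
    (g : N →ₗ[R] P) (f : M →ₗ[R] R) (x : N) : g ∘ₗ f.smulRight x = f.smulRight (g x) := by
  ext
  simp

theorem Submodule.eq_top_of_smulRight_mem {K V W : Type*} [Field K] [AddCommGroup V]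
    [Module K V] [FiniteDimensional K V] [AddCommGroup W] [Module K W]
    (p : Submodule K (V →ₗ[K] W)) (h : ∀ (f : Module.Dual K V) (w : W), f.smulRight w ∈ p) :
    p = ⊤ := by
  refine eq_top_iff.mpr fun φ _ ↦ ?_
  let b := Module.finBasis K V
  have hφ : φ = ∑ i, (b.coord i).smulRight (φ (b i)) := b.ext fun j ↦ by
    simp [Finsupp.single_apply]
  rw [hφ]
  exact sum_mem fun i _ ↦ h _ _

theorem RepIsIrreducible.eq_top_of_comp_mem {F : Type u} [Field F] {H : Type v} [Group H]
    {V W : Type*} [AddCommGroup V] [Module F V] [FiniteDimensional F V]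
    [AddCommGroup W] [Module F W] {τ : Representation F H W} (hτ : RepIsIrreducible τ)
    (p : Submodule F (V →ₗ[F] W)) (hp : p ≠ ⊥) (hleft : ∀ h, ∀ ψ ∈ p, τ h ∘ₗ ψ ∈ p)
    (hright : ∀ ψ ∈ p, ∀ B : Module.End F V, ψ ∘ₗ B ∈ p) : p = ⊤ := by
  obtain ⟨ψ, hψp, hψ0⟩ := Submodule.exists_mem_ne_zero_of_ne_bot hp
  obtain ⟨v, hv⟩ : ∃ v, ψ v ≠ 0 := not_forall.mp fun h ↦ hψ0 (LinearMap.ext h)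
  let q : Submodule F W := ⨅ f : Module.Dual F V, p.comap (LinearMap.smulRightₗ f)
  have hq (w : W) : w ∈ q ↔ ∀ f : Module.Dual F V, f.smulRight w ∈ p := by simp [q]
  have hq_inv (h : H) (w : W) (hw : w ∈ q) : τ h w ∈ q := (hq _).mpr fun f ↦ by
    simpa only [LinearMap.comp_smulRight] using hleft h _ ((hq w).mp hw f)
  have hψv : ψ v ∈ q := (hq _).mpr fun f ↦ by
    simpa only [LinearMap.comp_smulRight] using hright ψ hψp (f.smulRight v)
  have hq_top : q = ⊤ :=
    (hτ.2 q hq_inv).resolve_left ((Submodule.ne_bot_iff q).mpr ⟨_, hψv, hv⟩)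
  exact p.eq_top_of_smulRight_mem fun f w ↦ (hq w).mp (hq_top ▸ Submodule.mem_top) f

theorem hom_rep_irreducible'_general {F : Type u} [Field F]
    {H1 : Type v} [Group H1] {H2 : Type w} [Group H2]
    {W1 : Type x} [AddCommGroup W1] [Module F W1]
    {W2 : Type y} [AddCommGroup W2] [Module F W2] [FiniteDimensional F W2]
    (τ1 : Representation F H1 W1) (τ2 : Representation F H2 W2)
    (hτ1 : RepIsIrreducible τ1) (hτ2 : RepIsAbsolutelyIrreducible τ2) :
    Nontrivial (W2 →ₗ[F] W1) ∧
      ∀ p : Submodule F (W2 →ₗ[F] W1),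
        (∀ (h1 : H1) (h2 : H2), ∀ ψ ∈ p, (τ1 h1) ∘ₗ ψ ∘ₗ (τ2 h2⁻¹) ∈ p) →
          p = ⊥ ∨ p = ⊤ := by
  have : Nontrivial W1 := hτ1.1
  have : Nontrivial (F ⊗[F] W2) := (hτ2 F).1
  have : Nontrivial W2 := (TensorProduct.lid F W2).symm.toEquiv.nontrivial
  refine ⟨inferInstance, fun p hp ↦ or_iff_not_imp_left.mpr fun hp_ne ↦ ?_⟩
  refine hτ1.eq_top_of_comp_mem p hp_ne
    (fun h ψ hψ ↦ by simpa [Module.End.one_eq_id] using hp h 1 ψ hψ) fun ψ hψ B ↦ ?_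
  have hspan : Submodule.span F (Set.range τ2) ≤ p.comap (LinearMap.llcomp F W2 W2 W1 ψ) :=
    Submodule.span_le.mpr <| Set.range_subset_iff.mpr fun h ↦ show ψ ∘ₗ τ2 h ∈ p by
      simpa [Module.End.one_eq_id] using hp 1 h⁻¹ ψ hψ
  exact hspan (hτ2.span_range_eq_top ▸ Submodule.mem_top)

/-- If `τ1 : H1 → Aut_F(W1)` is an irreducible finite-dimensional representation over `F` and
`τ2 : H2 → Aut_F(W2)` is an absolutely irreducible finite-dimensional representation over `F`,
then the representation of `H1 × H2` on `Hom_F(W2, W1)` given by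
`(h1, h2) · ψ = τ1 h1 ∘ ψ ∘ τ2 h2⁻¹` is irreducible. -/
theorem hom_rep_irreducible' {F : Type u} [Field F]
    {H1 : Type v} [Group H1] {H2 : Type w} [Group H2]
    {W1 : Type x} [AddCommGroup W1] [Module F W1] [FiniteDimensional F W1]
    {W2 : Type y} [AddCommGroup W2] [Module F W2] [FiniteDimensional F W2]
    (τ1 : Representation F H1 W1) (τ2 : Representation F H2 W2)
    (hτ1 : RepIsIrreducible τ1) (hτ2 : RepIsAbsolutelyIrreducible τ2) :
    Nontrivial (W2 →ₗ[F] W1) ∧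
      ∀ p : Submodule F (W2 →ₗ[F] W1),
        (∀ (h1 : H1) (h2 : H2), ∀ ψ ∈ p, (τ1 h1) ∘ₗ ψ ∘ₗ (τ2 h2⁻¹) ∈ p) →
          p = ⊥ ∨ p = ⊤ :=
  hom_rep_irreducible'_general τ1 τ2 hτ1 hτ2
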